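/- arXiv:2409.14648 — 6 statements merged into one kernel-verified Lean document; each statement's English description precedes it below -/
import Mathlib

section
/- Let n ≥ 3 and let f,g:[n]→[n] be fixed-point-free functions realized by points A_1,…,A_n in a metric space (X,d) (all pairwise distances distinct, d(A_i,A_{f(i)}) minimal and d(A_i,A_{g(i)}) maximal among distances from A_i). Then the functional graph G_f has no directed cycle of length greater than two. -/
/-!
Along an orbit `i, f i, f² i, …` of the nearest-neighbour map, the lengths of consecutive
edges never increase, and the second edge is strictly shorter than the first unless
`f (f i) = i`: the nearest neighbour of `f i` is `f (f i)`, which beats `i` unless they coincide.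
On a cycle the edge lengths return to their initial value, so the second edge is as long as the first.
-/

section

variable {ι X : Type*} [PseudoMetricSpace X]

def IsNearestNeighborMap (A : ι → X) (f : ι → ι) : Prop :=
  ∀ i j, j ≠ i → j ≠ f i → dist (A i) (A (f i)) < dist (A i) (A j)

namespace IsNearestNeighborMap

variable {A : ι → X} {f : ι → ι}

theorem dist_apply_apply_lt (hA : IsNearestNeighborMap A f) {i : ι} (hi : f (f i) ≠ i) :
    dist (A (f i)) (A (f (f i))) < dist (A i) (A (f i)) := by
  have hfi : i ≠ f i := fun h => hi (by rw [← h, ← h])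
  simpa only [dist_comm (A i)] using hA (f i) i hfi hi.symm

theorem dist_apply_apply_le (hA : IsNearestNeighborMap A f) (i : ι) :
    dist (A (f i)) (A (f (f i))) ≤ dist (A i) (A (f i)) := by
  by_cases hi : f (f i) = i
  · rw [hi, dist_comm]
  · exact (hA.dist_apply_apply_lt hi).le

theorem antitone_dist_iterate (hA : IsNearestNeighborMap A f) (i : ι) :
    Antitone fun m => dist (A (f^[m] i)) (A (f^[m + 1] i)) :=
  antitone_nat_of_succ_le fun m => by
    simpa only [Function.iterate_succ_apply'] using hA.dist_apply_apply_le (f^[m] i)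

theorem apply_apply_eq_of_isPeriodicPt (hA : IsNearestNeighborMap A f) {i : ι} {k : ℕ}
    (hk : 0 < k) (hper : Function.IsPeriodicPt f k i) : f (f i) = i := by
  set D := fun m => dist (A (f^[m] i)) (A (f^[m + 1] i))
  have hDk : D k = D 0 := by
    simp only [D, Function.iterate_succ_apply', hper.eq, Function.iterate_zero_apply]
  by_contra hi
  have hlt : D 1 < D 0 := hA.dist_apply_apply_lt hi
  have hle : D k ≤ D 1 := hA.antitone_dist_iterate i hk
  exact hlt.not_ge (hDk ▸ hle)

end IsNearestNeighborMap

end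

theorem stmt0_general (n : ℕ) (f : Fin n → Fin n)
    (X : Type*) [MetricSpace X] (A : Fin n → X)
    (hmin : ∀ i j : Fin n, j ≠ i → j ≠ f i → dist (A i) (A (f i)) < dist (A i) (A j)) :
    ∀ (i : Fin n) (k : ℕ), 0 < k → f^[k] i = i → f (f i) = i :=
  fun _ _ hk hper => IsNearestNeighborMap.apply_apply_eq_of_isPeriodicPt hmin hk hper

/-- If a pair `(f, g)` of fixed-point-free functions on `Fin n` (`n ≥ 3`) is realized by
points `A` in a metric space (all pairwise distances distinct, `A (f i)` nearest to `A i`,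
`A (g i)` farthest from `A i`), then the functional graph of `f` has no directed cycle of
length greater than two, i.e. every periodic point of `f` satisfies `f (f i) = i`. -/
theorem stmt0 (n : ℕ) (hn : 3 ≤ n) (f g : Fin n → Fin n)
    (hf : ∀ i, f i ≠ i) (hg : ∀ i, g i ≠ i)
    (X : Type*) [MetricSpace X] (A : Fin n → X)
    (hdist : ∀ i j s t : Fin n, i ≠ j → s ≠ t →
      ({i, j} : Finset (Fin n)) ≠ {s, t} → dist (A i) (A j) ≠ dist (A s) (A t))
    (hmin : ∀ i j : Fin n, j ≠ i → j ≠ f i → dist (A i) (A (f i)) < dist (A i) (A j))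
    (hmax : ∀ i j : Fin n, j ≠ i → j ≠ g i → dist (A i) (A j) < dist (A i) (A (g i))) :
    ∀ (i : Fin n) (k : ℕ), 0 < k → f^[k] i = i → f (f i) = i :=
  stmt0_general n f X A hmin
end

section
/- Suppose n ≥ 3 and f,g:[n]→[n] are fixed-point-free functions with f(i) ≠ g(i) for all i, such that: (1) neither G_f nor G_g has a directed cycle of length greater than two, (2) f∘g has at most one fixed point, and (3) whenever f(g(i))=i, i is a source in G_g and g(i) is a source in G_f. Then the pair (f,g) is realizable in some metric space: there exists a metric space (X,d) and points A_1,…,A_n with all pairwise distances distinct, A_{f(i)} the nearest point to A_i and A_{g(i)} the farthest point from A_i for every i. -/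
/-!
A symmetric integer level on the pairs of a finite set is refined by a metric with pairwise
distinct distances: break ties lexicographically, then add a constant large enough that all
values lie in some `[a, 2a]`, where the triangle inequality is automatic. So it suffices to give
levels for which `f i` is the strictly lowest and `g i` the strictly highest partner of each `i`.

Edges of `G_f` get very low levels, rising with the depth of their tail below the 2-cycles of
`G_f` (its only cycles); edges of `G_g` get very high levels, falling with depth; other pairs sit
near `0`. The one conflict is an edge `{a, g a}` with `f (g a) = a`, the nearest edge of `g a` and
the farthest of `a`. It is put at `0`, the other pairs through `a` at `-1` and those through `g a`
at `1`; this is consistent because `a` is a source of `G_g`, `g a` one of `G_f`, and `f ∘ g` has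
no other fixed point.
-/

open Function

theorem exists_injective_refining {β : Type*} [Finite β] (S : β → ℤ) :
    ∃ w : β → ℤ, Injective w ∧ ∀ a b, S a < S b → w a < w b := by
  obtain ⟨N, ⟨e⟩⟩ := Finite.exists_equiv_fin β
  -- lexicographic order on `(S b, e b)`
  let w : β → ℤ := fun b => S b * N + (e b : ℕ)
  have hmono : ∀ a b, S a < S b → w a < w b := by
    intro a b hab
    have ha : ((e a : ℕ) : ℤ) < N := by exact_mod_cast (e a).isLt
    have hb : (0 : ℤ) ≤ (e b : ℕ) := by positivity
    have : (S a + 1) * N ≤ S b * N := by gcongr; omega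
    simp only [w]
    nlinarith
  refine ⟨w, fun a b hab => ?_, hmono⟩
  rcases lt_trichotomy (S a) (S b) with h | h | h
  · exact absurd hab (hmono a b h).ne
  · have : ((e a : ℕ) : ℤ) = (e b : ℕ) := by simpa [w, h] using hab
    exact e.injective (Fin.ext (by exact_mod_cast this))
  · exact absurd hab (hmono b a h).ne'

theorem exists_metricSpace_dist_eq_add {X : Type*} [Finite X] (w : Sym2 X → ℤ) :
    ∃ (_ : MetricSpace X) (c : ℝ), ∀ x y, x ≠ y → dist x y = c + w s(x, y) := by
  classical
  obtain ⟨M, hM⟩ := Finite.exists_le (fun e => |(w e : ℝ)|)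
  let d : X → X → ℝ := fun x y => if x = y then 0 else 3 * M + 1 + w s(x, y)
  have hlower : ∀ x y, x ≠ y → 2 * M + 1 ≤ d x y := fun x y h => by
    simp only [d, if_neg h]; linarith [(abs_le.mp (hM s(x, y))).1]
  have hupper : ∀ x y, x ≠ y → d x y ≤ 4 * M + 1 := fun x y h => by
    simp only [d, if_neg h]; linarith [(abs_le.mp (hM s(x, y))).2]
  have hM0 : ∀ x y : X, x ≠ y → 0 ≤ M := fun x y _ => (abs_nonneg _).trans (hM s(x, y))
  have hnonneg : ∀ x y, 0 ≤ d x y := fun x y => by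
    by_cases h : x = y
    · simp [d, h]
    · linarith [hlower x y h, hM0 x y h]
  refine ⟨{ dist := d
            dist_self := fun x => if_pos rfl
            dist_comm := fun x y => by
              by_cases h : x = y
              · simp [d, h]
              · simp [d, h, Ne.symm h, Sym2.eq_swap]
            dist_triangle := fun x y z => by
              show d x z ≤ d x y + d y z
              by_cases hxz : x = z
              · simp only [d, if_pos hxz]; linarith [hnonneg x y, hnonneg y z]
              by_cases hxy : x = y
              · subst hxy; simp only [d, if_pos rfl]; linarith
              by_cases hyz : y = z
              · subst hyz; simp only [d, if_pos rfl]; linarith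
              linarith [hupper x z hxz, hlower x y hxy, hlower y z hyz, hM0 x z hxz]
            eq_of_dist_eq_zero := fun {x y} h => by
              by_contra hxy
              linarith [hlower x y hxy, hM0 x y hxy, show d x y = 0 from h] },
    3 * M + 1, fun x y h => if_neg h⟩

theorem exists_metricSpace_refining {X : Type*} [Finite X] (L : X → X → ℤ)
    (hL : ∀ x y, L x y = L y x) :
    ∃ _ : MetricSpace X,
      (∀ x y x' y' : X, x ≠ y → x' ≠ y' → s(x, y) ≠ s(x', y') →
        dist x y ≠ dist x' y') ∧
      ∀ x y x' y' : X, x ≠ y → x' ≠ y' → L x y < L x' y' → dist x y < dist x' y' := by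
  obtain ⟨w, hinj, hmono⟩ := exists_injective_refining (Sym2.lift ⟨L, hL⟩)
  obtain ⟨_, c, hdist⟩ := exists_metricSpace_dist_eq_add w
  refine ⟨‹_›, fun x y x' y' h h' hne => ?_, fun x y x' y' h h' hlt => ?_⟩
  · rw [hdist x y h, hdist x' y' h', Ne, add_right_inj, Int.cast_inj]
    exact hinj.ne hne
  · rw [hdist x y h, hdist x' y' h', add_lt_add_iff_left, Int.cast_lt]
    exact hmono _ _ hlt

section Depth

variable {α : Type*} (f : α → α)

open Classical in
/-- The number of steps the orbit of `x` needs to reach a point of period two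
(junk value `0` if it never does). -/
noncomputable def depth (x : α) : ℕ :=
  if h : ∃ k, IsPeriodicPt f 2 (f^[k] x) then Nat.find h else 0

theorem exists_iterate_mem_periodicPts [Finite α] (x : α) : ∃ k, f^[k] x ∈ periodicPts f := by
  obtain ⟨m, n, hne, heq⟩ := Finite.exists_ne_map_eq_of_infinite (f^[·] x)
  wlog hlt : m < n generalizing m n
  · exact this n m hne.symm heq.symm (by omega)
  refine ⟨m, mk_mem_periodicPts (Nat.sub_pos_of_lt hlt) ?_⟩
  rw [IsPeriodicPt, IsFixedPt, ← iterate_add_apply, Nat.sub_add_cancel hlt.le]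
  exact heq.symm

variable {f}

theorem exists_isPeriodicPt_two_iterate [Finite α]
    (hcyc : ∀ x k, 0 < k → IsPeriodicPt f k x → IsPeriodicPt f 2 x) (x : α) :
    ∃ k, IsPeriodicPt f 2 (f^[k] x) := by
  obtain ⟨k, hk⟩ := exists_iterate_mem_periodicPts f x
  exact ⟨k, hcyc _ _ (minimalPeriod_pos_of_mem_periodicPts hk) (isPeriodicPt_minimalPeriod f _)⟩

theorem depth_eq_zero {x : α} (hx : IsPeriodicPt f 2 x) : depth f x = 0 := by
  classical
  have h : ∃ k, IsPeriodicPt f 2 (f^[k] x) := ⟨0, hx⟩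
  rw [depth, dif_pos h, Nat.find_eq_zero]
  exact hx

theorem depth_eq_depth_apply_add_one {x : α} (h : ∃ k, IsPeriodicPt f 2 (f^[k] x))
    (hx : ¬IsPeriodicPt f 2 x) : depth f x = depth f (f x) + 1 := by
  classical
  have h' : ∃ k, IsPeriodicPt f 2 (f^[k] (f x)) := by
    obtain ⟨_ | k, hk⟩ := h
    · exact absurd hk hx
    · exact ⟨k, hk⟩
  rw [depth, depth, dif_pos h, dif_pos h']
  exact Nat.find_comp_succ h h' hx

end Depth

section Level

variable {α : Type*} [Fintype α] (f g : α → α)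

noncomputable def maxDepth : ℕ := Finset.univ.sup (depth f)

theorem depth_le_maxDepth (x : α) : depth f x ≤ maxDepth f :=
  Finset.le_sup (Finset.mem_univ x)

variable [DecidableEq α]

noncomputable def edgeScore (i j : α) : ℤ :=
  if f i = j then 2 * (maxDepth f + 2 - depth f i)
  else if f j = i then 2 * (maxDepth f + 2 - depth f j)
  else if f (g i) = i ∨ f (g j) = j then 1
  else 0

noncomputable def pairLevel (i j : α) : ℤ :=
  if (f i = j ∨ f j = i) ∧ (g i = j ∨ g j = i) then 0
  else edgeScore g f i j - edgeScore f g i j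

theorem edgeScore_comm (i j : α) : edgeScore f g i j = edgeScore f g j i := by
  have hcycle : f i = j → f j = i → depth f i = depth f j := fun hij hji => by
    rw [depth_eq_zero (x := i) (by simp [IsPeriodicPt, IsFixedPt, hij, hji]),
      depth_eq_zero (x := j) (by simp [IsPeriodicPt, IsFixedPt, hij, hji])]
  unfold edgeScore
  split_ifs <;> first | rfl | rw [hcycle ‹_› ‹_›] | tauto

theorem pairLevel_comm (i j : α) : pairLevel f g i j = pairLevel f g j i := by
  simp only [pairLevel, edgeScore_comm _ _ i j, or_comm]

theorem pairLevel_swap (i j : α) : pairLevel g f i j = -pairLevel f g i j := by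
  simp only [pairLevel, and_comm]
  split_ifs <;> ring

theorem edgeScore_nonneg (i j : α) : 0 ≤ edgeScore f g i j := by
  have := depth_le_maxDepth f i
  have := depth_le_maxDepth f j
  unfold edgeScore
  split_ifs <;> omega

theorem edgeScore_le_one {i j : α} (h : ¬(f i = j ∨ f j = i)) : edgeScore f g i j ≤ 1 := by
  rw [not_or] at h
  unfold edgeScore
  split_ifs <;> simp_all

theorem one_le_edgeScore {i : α} (hi : f (g i) = i) (j : α) : 1 ≤ edgeScore f g i j := by
  have := depth_le_maxDepth f i
  have := depth_le_maxDepth f j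
  unfold edgeScore
  split_ifs <;> first | omega | tauto

theorem edgeScore_apply_self (i : α) :
    edgeScore f g i (f i) = 2 * (maxDepth f + 2 - depth f i) :=
  if_pos rfl

theorem edgeScore_of_apply_eq {i j : α} (hij : f i ≠ j) (hji : f j = i) :
    edgeScore f g i j = 2 * (maxDepth f + 2 - depth f j) := by
  rw [edgeScore, if_neg hij, if_pos hji]

theorem neg_one_le_pairLevel {i j : α} (h : ¬(f i = j ∨ f j = i)) :
    -1 ≤ pairLevel f g i j := by
  unfold pairLevel
  split_ifs
  · norm_num
  · linarith [edgeScore_nonneg g f i j, edgeScore_le_one f g h]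

variable {f g}

theorem pairLevel_apply_lt (hfg : ∀ i, f i ≠ g i)
    (hcyc : ∀ x k, 0 < k → IsPeriodicPt f k x → IsPeriodicPt f 2 x)
    (hsrc : ∀ i, f (g i) = i → ∀ j, f j ≠ g i) (hone : (fixedPoints (f ∘ g)).Subsingleton)
    {i j : α} (hjf : j ≠ f i) : pairLevel f g i (f i) < pairLevel f g i j := by
  have hfj : f i ≠ j := hjf.symm
  by_cases hspecial : g (f i) = i
  · -- `f i` is the fixed point of `f ∘ g`, so `i` is a source of `G_f`
    have hfix : f i ∈ fixedPoints (f ∘ g) := congrArg f hspecial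
    have hsrc_i : ∀ k, f k ≠ i := by simpa [hspecial] using hsrc (f i) hfix
    have hnotF : ¬(f i = j ∨ f j = i) := by tauto
    have hscore : edgeScore f g i j = 0 := by
      rw [edgeScore, if_neg hfj, if_neg (hsrc_i j), if_neg]
      rintro (h | h)
      · exact hsrc_i _ h
      · exact hjf (hone h hfix)
    rw [pairLevel, if_pos ⟨Or.inl rfl, Or.inr hspecial⟩, pairLevel, if_neg (fun h => hnotF h.1),
      hscore]
    linarith [one_le_edgeScore g f hspecial j]
  · have hnotG : ¬(g i = f i ∨ g (f i) = i) := by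
      rintro (h | h)
      · exact hfg i h.symm
      · exact hspecial h
    have hlhs : pairLevel f g i (f i) ≤ 1 - 2 * (maxDepth f + 2 - depth f i) := by
      rw [pairLevel, if_neg (fun h => hnotG h.2)]
      linarith [edgeScore_le_one g f hnotG, edgeScore_apply_self f g i]
    have hdepth := depth_le_maxDepth f i
    by_cases hfji : f j = i
    · have hj : depth f j = depth f i + 1 := by
        rw [depth_eq_depth_apply_add_one (exists_isPeriodicPt_two_iterate hcyc j), hfji]
        show ¬f (f j) = j
        rwa [hfji]
      have hrhs : -2 * (maxDepth f + 2 - depth f j) ≤ pairLevel f g i j := by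
        have := depth_le_maxDepth f j
        unfold pairLevel
        split_ifs
        · omega
        · linarith [edgeScore_nonneg g f i j, edgeScore_of_apply_eq f g hfj hfji]
      omega
    · linarith [neg_one_le_pairLevel f g (show ¬(f i = j ∨ f j = i) by tauto)]

theorem pairLevel_lt_apply (hfg : ∀ i, f i ≠ g i)
    (hcyc : ∀ x k, 0 < k → IsPeriodicPt g k x → IsPeriodicPt g 2 x)
    (hsrc : ∀ i, f (g i) = i → ∀ j, g j ≠ i) (hone : (fixedPoints (f ∘ g)).Subsingleton)
    {i j : α} (hjg : j ≠ g i) : pairLevel f g i j < pairLevel f g i (g i) := by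
  have hone' : (fixedPoints (g ∘ f)).Subsingleton := by
    rw [← (bijOn_fixedPoints_comp f g).image_eq]
    exact hone.image g
  have key := pairLevel_apply_lt (fun i => (hfg i).symm) hcyc
    (fun i hi => hsrc (f i) (congrArg f hi)) hone' hjg
  rwa [pairLevel_swap f g, pairLevel_swap f g, neg_lt_neg_iff] at key

end Level

theorem stmt5_general (n : ℕ) (f g : Fin n → Fin n)
    (hf : ∀ i, f i ≠ i) (hg : ∀ i, g i ≠ i) (hfg : ∀ i, f i ≠ g i)
    (hcycf : ∀ (i : Fin n) (k : ℕ), 0 < k → f^[k] i = i → f (f i) = i)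
    (hcycg : ∀ (i : Fin n) (k : ℕ), 0 < k → g^[k] i = i → g (g i) = i)
    (hone : ∀ i j : Fin n, f (g i) = i → f (g j) = j → i = j)
    (hsrc : ∀ i : Fin n, f (g i) = i →
      (∀ j : Fin n, g j ≠ i) ∧ (∀ j : Fin n, f j ≠ g i)) :
    ∃ (X : Type) (_ : MetricSpace X) (A : Fin n → X),
      (∀ i j s t : Fin n, i ≠ j → s ≠ t →
        ({i, j} : Finset (Fin n)) ≠ {s, t} → dist (A i) (A j) ≠ dist (A s) (A t)) ∧
      (∀ i j : Fin n, j ≠ i → j ≠ f i → dist (A i) (A (f i)) < dist (A i) (A j)) ∧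
      (∀ i j : Fin n, j ≠ i → j ≠ g i → dist (A i) (A j) < dist (A i) (A (g i))) := by
  have hone' : (fixedPoints (f ∘ g)).Subsingleton := fun i hi j hj => hone i j hi hj
  obtain ⟨_, hdistinct, hmono⟩ :=
    exists_metricSpace_refining (pairLevel f g) (pairLevel_comm f g)
  refine ⟨Fin n, ‹_›, id, fun i j s t hij hst hne => ?_, fun i j hji hjf => ?_,
    fun i j hji hjg => ?_⟩
  · refine hdistinct i j s t hij hst fun h => hne ?_
    rw [← Sym2.toFinset_mk_eq, h, Sym2.toFinset_mk_eq]
  · exact hmono _ _ _ _ (hf i).symm hji.symm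
      (pairLevel_apply_lt hfg hcycf (fun i hi => (hsrc i hi).2) hone' hjf)
  · exact hmono _ _ _ _ hji.symm (hg i).symm
      (pairLevel_lt_apply hfg hcycg (fun i hi => (hsrc i hi).1) hone' hjg)

/-- If `n ≥ 3` and `f, g : Fin n → Fin n` are fixed-point-free with `f i ≠ g i`,
the functional graphs of `f` and `g` have no directed cycles of length greater than two,
`f ∘ g` has at most one fixed point, and whenever `f (g i) = i` the vertex `i` is a source
in `G_g` and `g i` is a source in `G_f`, then the pair `(f, g)` is realizable in some
metric space. -/
theorem stmt5 (n : ℕ) (hn : 3 ≤ n) (f g : Fin n → Fin n)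
    (hf : ∀ i, f i ≠ i) (hg : ∀ i, g i ≠ i) (hfg : ∀ i, f i ≠ g i)
    (hcycf : ∀ (i : Fin n) (k : ℕ), 0 < k → f^[k] i = i → f (f i) = i)
    (hcycg : ∀ (i : Fin n) (k : ℕ), 0 < k → g^[k] i = i → g (g i) = i)
    (hone : ∀ i j : Fin n, f (g i) = i → f (g j) = j → i = j)
    (hsrc : ∀ i : Fin n, f (g i) = i →
      (∀ j : Fin n, g j ≠ i) ∧ (∀ j : Fin n, f j ≠ g i)) :
    ∃ (X : Type) (_ : MetricSpace X) (A : Fin n → X),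
      (∀ i j s t : Fin n, i ≠ j → s ≠ t →
        ({i, j} : Finset (Fin n)) ≠ {s, t} → dist (A i) (A j) ≠ dist (A s) (A t)) ∧
      (∀ i j : Fin n, j ≠ i → j ≠ f i → dist (A i) (A (f i)) < dist (A i) (A j)) ∧
      (∀ i j : Fin n, j ≠ i → j ≠ g i → dist (A i) (A j) < dist (A i) (A (g i))) :=
  stmt5_general n f g hf hg hfg hcycf hcycg hone hsrc
end

section
/- Let A_1,…,A_n be points in ℝ^k with n ≥ 3, and suppose that for i=1,2 and all j ≠ i with j ≠ 3, the distance A_iA_3 < A_iA_j. Then the angle ∠A_1A_3A_2 is strictly greater than π/3. -/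
open EuclideanGeometry

section

variable {V P : Type*} [NormedAddCommGroup V] [InnerProductSpace ℝ V] [MetricSpace P]
  [NormedAddTorsor V P]

theorem dist_sq_le_of_angle_le_pi_div_three {a b c : P} (h : ∠ a c b ≤ Real.pi / 3) :
    dist a b ^ 2 ≤ dist a c ^ 2 + dist b c ^ 2 - dist a c * dist b c := by
  have hcos : 1 / 2 ≤ Real.cos (∠ a c b) := by
    rw [← Real.cos_pi_div_three]
    exact Real.cos_le_cos_of_nonneg_of_le_pi (angle_nonneg a c b)
      (by linarith [Real.pi_pos]) h
  have hlaw := law_cos a c b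
  rw [dist_comm b c] at hlaw ⊢
  nlinarith [mul_nonneg (dist_nonneg (x := a) (y := c)) (dist_nonneg (x := c) (y := b))]

theorem pi_div_three_lt_angle_of_dist_lt {a b c : P} (hac : dist a c < dist a b)
    (hbc : dist b c < dist a b) : Real.pi / 3 < ∠ a c b := by
  by_contra! h
  have hle := dist_sq_le_of_angle_le_pi_div_three h
  -- with `x, y < z`: `z² - (x² + y² - x y) = (z - x)(z - y) + x (z - x) + y (z - y) > 0`
  nlinarith [mul_pos (sub_pos.2 hac) (sub_pos.2 hbc),
    mul_nonneg (dist_nonneg (x := a) (y := c)) (sub_pos.2 hac).le,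
    mul_nonneg (dist_nonneg (x := b) (y := c)) (sub_pos.2 hbc).le]

end

theorem stmt8_general (k n : ℕ) (A : Fin n → EuclideanSpace ℝ (Fin k))
    (p q r : Fin n) (hpq : p ≠ q) (hpr : p ≠ r) (hqr : q ≠ r)
    (hp : ∀ j : Fin n, j ≠ p → j ≠ r → dist (A p) (A r) < dist (A p) (A j))
    (hq : ∀ j : Fin n, j ≠ q → j ≠ r → dist (A q) (A r) < dist (A q) (A j)) :
    Real.pi / 3 < ∠ (A p) (A r) (A q) := by
  refine pi_div_three_lt_angle_of_dist_lt (hp q hpq.symm hqr) ?_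
  rw [dist_comm (A p)]
  exact hq p hpq hpr

/-- If among points `A 1, …, A n` in `ℝ^k` (with `n ≥ 3`) the point `A r` is strictly
closest to both `A p` and `A q` (where `p, q, r` are distinct indices), then the angle
`∠ (A p) (A r) (A q)` is strictly greater than `π / 3`. -/
theorem stmt8 (k n : ℕ) (hn : 3 ≤ n) (A : Fin n → EuclideanSpace ℝ (Fin k))
    (p q r : Fin n) (hpq : p ≠ q) (hpr : p ≠ r) (hqr : q ≠ r)
    (hp : ∀ j : Fin n, j ≠ p → j ≠ r → dist (A p) (A r) < dist (A p) (A j))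
    (hq : ∀ j : Fin n, j ≠ q → j ≠ r → dist (A q) (A r) < dist (A q) (A j)) :
    Real.pi / 3 < ∠ (A p) (A r) (A q) :=
  stmt8_general k n A p q r hpq hpr hqr hp hq
end

section
/- Let α < 1/200 be positive, 2 ≤ s ≤ 8, k ≥ 9, and let v_1,…,v_s be unit vectors in ℝ^k with |v_i·v_j| ≤ α for all distinct i,j. Let α_1,…,α_s ∈ (0,π) with |cos α_i| ≤ α for all i. Then the set T = {x ∈ S^{k-1} : x·v_i = cos α_i for i = 1,…,s−1} is a (k−s)-dimensional sphere (a translate of a sphere in the orthogonal complement of span(v_1,…,v_{s-1})) of radius at least √(1 − 64α²). -/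
open scoped RealInnerProductSpace
open Finset

/-- Diagonal dominance bound: if `∑ i, t i * ⟪u i, u j⟫ = m j` for near-orthonormal
unit vectors `u`, then there is a uniform bound `T` on `|t j|` with
`T * (1 - (n-1)α) ≤ M`. -/
lemma aux_dom {E : Type*} [NormedAddCommGroup E] [InnerProductSpace ℝ E]
    {n : ℕ} (hn : 1 ≤ n) {α M : ℝ} (hα0 : 0 ≤ α)
    (u : Fin n → E) (hu : ∀ i, ‖u i‖ = 1)
    (hij : ∀ i j, i ≠ j → |⟪u i, u j⟫| ≤ α)
    (t m : Fin n → ℝ) (hm : ∀ j, |m j| ≤ M)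
    (ht : ∀ j, ∑ i, t i * ⟪u i, u j⟫ = m j) :
    ∃ T : ℝ, 0 ≤ T ∧ T * (1 - ((n : ℝ) - 1) * α) ≤ M ∧ ∀ j, |t j| ≤ T := by
  have hne : (Finset.univ : Finset (Fin n)).Nonempty := by
    simp [Finset.univ_nonempty_iff]
    exact Fin.pos_iff_nonempty.mp hn
  obtain ⟨j, -, hj⟩ := Finset.exists_mem_eq_sup' hne (fun i => |t i|)
  set T := Finset.univ.sup' hne (fun i => |t i|) with hTdef
  have hTj : ∀ i, |t i| ≤ T := fun i => Finset.le_sup' (fun i => |t i|) (Finset.mem_univ i)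
  have hT0 : 0 ≤ T := le_trans (abs_nonneg _) (hTj j)
  refine ⟨T, hT0, ?_, hTj⟩
  -- split the sum at j
  have hsplit : t j * ⟪u j, u j⟫ + ∑ i ∈ Finset.univ.erase j, t i * ⟪u i, u j⟫ = m j := by
    rw [← ht j]
    exact Finset.add_sum_erase _ (fun i => t i * ⟪u i, u j⟫) (Finset.mem_univ j)
  have hjj : ⟪u j, u j⟫ = 1 := by
    have := real_inner_self_eq_norm_sq (u j)
    rw [hu j] at this; simpa using this
  rw [hjj, mul_one] at hsplit
  have htj : t j = m j - ∑ i ∈ Finset.univ.erase j, t i * ⟪u i, u j⟫ := by linarith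
  have hbound : |t j| ≤ M + ((n : ℝ) - 1) * (T * α) := by
    rw [htj]
    calc |m j - ∑ i ∈ Finset.univ.erase j, t i * ⟪u i, u j⟫|
        ≤ |m j| + |∑ i ∈ Finset.univ.erase j, t i * ⟪u i, u j⟫| := abs_sub _ _
      _ ≤ M + ∑ i ∈ Finset.univ.erase j, |t i * ⟪u i, u j⟫| := by
          gcongr
          · exact hm j
          · exact Finset.abs_sum_le_sum_abs _ _
      _ ≤ M + ∑ i ∈ Finset.univ.erase j, T * α := by
          gcongr with i hi
          rw [abs_mul]
          exact mul_le_mul (hTj i) (hij i j (Finset.ne_of_mem_erase hi)) (abs_nonneg _) hT0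
      _ = M + ((n : ℝ) - 1) * (T * α) := by
          rw [Finset.sum_const, nsmul_eq_mul, Finset.card_erase_of_mem (Finset.mem_univ j),
            Finset.card_univ, Fintype.card_fin, Nat.cast_sub hn]
          push_cast
          ring
  have : T ≤ M + ((n : ℝ) - 1) * (T * α) := hj ▸ hbound
  nlinarith

lemma aux_mem_orth {E : Type*} [NormedAddCommGroup E] [InnerProductSpace ℝ E]
    {n : ℕ} (u : Fin n → E) (w : E) (h : ∀ i, ⟪u i, w⟫ = 0) :
    w ∈ (Submodule.span ℝ (Set.range u))ᗮ := by
  rw [Submodule.mem_orthogonal]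
  intro x hx
  induction hx using Submodule.span_induction with
  | mem y hy => obtain ⟨i, rfl⟩ := hy; exact h i
  | zero => simp
  | add y z _ _ hy hz => rw [inner_add_left, hy, hz, add_zero]
  | smul c y _ hy => rw [inner_smul_left, hy]; simp

set_option maxHeartbeats 1000000
/-- Intersection of cap boundaries: for `0 < α < 1/200`, `2 ≤ s ≤ 8`, `k ≥ 9`, unit
vectors `v₁, …, v_s ∈ ℝ^k` with pairwise inner products of absolute value `≤ α`, and
angles `αᵢ ∈ (0, π)` with `|cos αᵢ| ≤ α`, the set
`T = {x ∈ S^{k-1} : ⟪x, vᵢ⟫ = cos αᵢ for i < s}` is a sphere of radius at least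
`√(1 − 64 α²)` obtained by translating a sphere in the orthogonal complement of
`span (v₁, …, v_{s-1})`. -/
theorem stmt14 (α : ℝ) (hα0 : 0 < α) (hα : α < 1 / 200) (k s : ℕ)
    (hs2 : 2 ≤ s) (hs8 : s ≤ 8) (hk : 9 ≤ k)
    (v : Fin s → EuclideanSpace ℝ (Fin k))
    (hunit : ∀ i, ‖v i‖ = 1)
    (hinner : ∀ i j, i ≠ j → |⟪v i, v j⟫| ≤ α)
    (a : Fin s → ℝ) (ha : ∀ i, a i ∈ Set.Ioo 0 Real.pi)
    (hacos : ∀ i, |Real.cos (a i)| ≤ α) :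
    ∃ (c : EuclideanSpace ℝ (Fin k)) (r : ℝ),
      Real.sqrt (1 - 64 * α ^ 2) ≤ r ∧
      {x : EuclideanSpace ℝ (Fin k) | ‖x‖ = 1 ∧
          ∀ i : Fin (s - 1), ⟪x, v (Fin.castLE (Nat.sub_le s 1) i)⟫ =
            Real.cos (a (Fin.castLE (Nat.sub_le s 1) i))} =
        (fun w => c + w) ''
          {w : EuclideanSpace ℝ (Fin k) |
            w ∈ (Submodule.span ℝ
              (Set.range (fun i : Fin (s - 1) => v (Fin.castLE (Nat.sub_le s 1) i))))ᗮ ∧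
            ‖w‖ = r} := by
  classical
  set n := s - 1 with hn_def
  have hn1 : 1 ≤ n := by omega
  have hn7 : n ≤ 7 := by omega
  set u : Fin n → EuclideanSpace ℝ (Fin k) := fun i => v (Fin.castLE (Nat.sub_le s 1) i) with hu_def
  obtain ⟨m, hm_def⟩ : ∃ m : Fin n → ℝ,
      m = fun i => Real.cos (a (Fin.castLE (Nat.sub_le s 1) i)) := ⟨_, rfl⟩
  have hu_unit : ∀ i, ‖u i‖ = 1 := fun i => hunit _
  have hu_inner : ∀ i j, i ≠ j → |⟪u i, u j⟫| ≤ α := by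
    intro i j hij
    exact hinner _ _ (fun h => hij (by simpa using Fin.castLE_injective _ h))
  have hm_bd : ∀ i, |m i| ≤ α := by intro i; rw [hm_def]; exact hacos _
  have hna : ((n : ℝ) - 1) * α < 1 := by
    have : (n : ℝ) ≤ 7 := by exact_mod_cast hn7
    nlinarith
  set S := Submodule.span ℝ (Set.range u) with hS_def
  -- linear independence of u
  have hli : LinearIndependent ℝ u := by
    rw [Fintype.linearIndependent_iff]
    intro t ht0
    have hsum : ∀ j, ∑ i, t i * ⟪u i, u j⟫ = 0 := by
      intro j
      have : ⟪∑ i, t i • u i, u j⟫ = (0 : ℝ) := by rw [ht0]; simp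
      rw [sum_inner] at this
      simp only [real_inner_smul_left] at this
      exact this
    obtain ⟨T, hT0, hTle, hTj⟩ := aux_dom (M := 0) hn1 hα0.le u hu_unit hu_inner t (fun _ => 0)
      (fun j => by simp) hsum
    intro i
    have : T ≤ 0 := by nlinarith
    have := hTj i
    have : |t i| ≤ 0 := by linarith
    exact abs_nonpos_iff.mp this
  -- the solving map
  have hfinS : FiniteDimensional ℝ S := by
    apply FiniteDimensional.span_of_finite
    exact Set.finite_range u
  set φ : S →ₗ[ℝ] (Fin n → ℝ) :=
    { toFun := fun w => fun i => ⟪u i, (w : EuclideanSpace ℝ (Fin k))⟫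
      map_add' := by intro x y; ext i; simp [inner_add_right]
      map_smul' := by intro r x; ext i; simp [inner_smul_right] } with hφ_def
  have hφinj : Function.Injective φ := by
    rw [← LinearMap.ker_eq_bot, Submodule.eq_bot_iff]
    rintro ⟨w, hw⟩ hker
    have h0 : ∀ i, ⟪u i, w⟫ = 0 := by
      intro i
      have := congrFun hker i
      exact this
    have hwo : w ∈ Sᗮ := aux_mem_orth u w h0
    have : w = 0 := by
      have := Submodule.inf_orthogonal_eq_bot S
      have hmem : w ∈ S ⊓ Sᗮ := ⟨hw, hwo⟩
      rw [this] at hmem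
      simpa using hmem
    simpa using this
  have hfr : Module.finrank ℝ S = Module.finrank ℝ (Fin n → ℝ) := by
    rw [finrank_span_eq_card hli]
    simp
  have hφsurj : Function.Surjective φ :=
    (LinearMap.injective_iff_surjective_of_finrank_eq_finrank hfr).mp hφinj
  obtain ⟨c', hc'⟩ := hφsurj m
  set c : EuclideanSpace ℝ (Fin k) := (c' : EuclideanSpace ℝ (Fin k)) with hc_def
  have hcS : c ∈ S := c'.2
  have hc : ∀ i, ⟪u i, c⟫ = m i := fun i => congrFun hc' i
  -- norm bound on c
  obtain ⟨b, hb⟩ := (Submodule.mem_span_range_iff_exists_fun ℝ).mp hcS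
  have hbsum : ∀ j, ∑ i, b i * ⟪u i, u j⟫ = ⟪c, u j⟫ := by
    intro j
    rw [← hb, sum_inner]
    simp only [real_inner_smul_left]
  have hbsum' : ∀ j, ∑ i, b i * ⟪u i, u j⟫ = m j := by
    intro j; rw [hbsum j, real_inner_comm, hc j]
  obtain ⟨T, hT0, hTle, hTj⟩ := aux_dom hn1 hα0.le u hu_unit hu_inner b m hm_bd hbsum'
  have hc_sq : ‖c‖ ^ 2 ≤ (n : ℝ) * (T * α) := by
    have : ‖c‖ ^ 2 = ∑ i, b i * m i := by
      rw [← real_inner_self_eq_norm_sq]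
      conv_lhs => rw [← hb, sum_inner]
      refine Finset.sum_congr rfl fun i _ => ?_
      rw [real_inner_smul_left, hb, hc i]
    rw [this]
    calc ∑ i, b i * m i ≤ ∑ i : Fin n, T * α := by
          refine Finset.sum_le_sum fun i _ => ?_
          calc b i * m i ≤ |b i * m i| := le_abs_self _
            _ = |b i| * |m i| := abs_mul _ _
            _ ≤ T * α := mul_le_mul (hTj i) (hm_bd i) (abs_nonneg _) hT0
      _ = (n : ℝ) * (T * α) := by simp [mul_comm]
  have hn7' : (n : ℝ) ≤ 7 := by exact_mod_cast hn7
  have hn1' : (1 : ℝ) ≤ (n : ℝ) := by exact_mod_cast hn1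
  have hT2 : T ≤ 2 * α := by
    nlinarith [mul_le_mul_of_nonneg_right (show ((n:ℝ)) - 1 ≤ 6 by linarith)
        (mul_nonneg hα0.le hT0),
      mul_le_mul_of_nonneg_right hα.le hT0]
  have hc_sq64 : ‖c‖ ^ 2 ≤ 64 * α ^ 2 := by
    nlinarith [hc_sq, mul_le_mul_of_nonneg_right hn7' (mul_nonneg hT0 hα0.le),
      mul_le_mul_of_nonneg_right hT2 hα0.le, sq_nonneg α]
  set r : ℝ := Real.sqrt (1 - ‖c‖ ^ 2) with hr_def
  have h64 : (0:ℝ) < 1 - 64 * α ^ 2 := by nlinarith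
  have hr_ge : Real.sqrt (1 - 64 * α ^ 2) ≤ r := by
    apply Real.sqrt_le_sqrt; linarith
  have hr0 : 0 ≤ r := Real.sqrt_nonneg _
  have hr_sq : r ^ 2 = 1 - ‖c‖ ^ 2 := Real.sq_sqrt (by nlinarith [hc_sq64, h64])
  refine ⟨c, r, hr_ge, ?_⟩
  ext x
  simp only [Set.mem_setOf_eq, Set.mem_image]
  constructor
  · rintro ⟨hx1, hx2⟩
    have hxui : ∀ i : Fin n, ⟪u i, x - c⟫ = 0 := by
      intro i
      rw [inner_sub_right, hc i]
      have h1 := hx2 i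
      simp only [hu_def, hm_def]
      rw [real_inner_comm, h1, sub_self]
    refine ⟨x - c, ⟨?_, ?_⟩, by show c + (x - c) = x; abel⟩
    · exact aux_mem_orth u _ hxui
    · have horth : ⟪c, x - c⟫ = 0 :=
        Submodule.inner_right_of_mem_orthogonal hcS (aux_mem_orth u _ hxui)
      have hxc : ⟪x, c⟫ = ‖c‖ ^ 2 := by
        have : ⟪x - c, c⟫ = 0 := by rw [real_inner_comm]; exact horth
        rw [inner_sub_left, sub_eq_zero] at this
        rw [this, real_inner_self_eq_norm_sq]
      have : ‖x - c‖ ^ 2 = 1 - ‖c‖ ^ 2 := by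
        rw [norm_sub_sq_real, hx1, hxc]
        ring
      rw [← Real.sqrt_sq (norm_nonneg (x - c)), this, hr_def]
  · rintro ⟨w, ⟨hwS, hwr⟩, rfl⟩
    have horth : ⟪c, w⟫ = 0 := Submodule.inner_right_of_mem_orthogonal hcS hwS
    constructor
    · have : ‖c + w‖ ^ 2 = 1 := by
        rw [norm_add_sq_real, horth, hwr, hr_sq]
        ring
      nlinarith [norm_nonneg (c + w), sq_nonneg (‖c + w‖ - 1)]
    · intro i
      have hwu : ⟪u i, w⟫ = 0 :=
        Submodule.inner_right_of_mem_orthogonal (Submodule.subset_span (Set.mem_range_self i)) hwS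
      have h1 := hc i
      simp only [hu_def, hm_def] at h1
      have h2 : ⟪w, v (Fin.castLE (Nat.sub_le s 1) i)⟫ = 0 := by
        rw [real_inner_comm]
        simpa only [hu_def] using hwu
      rw [inner_add_left, h2, add_zero, real_inner_comm]
      exact h1
end

section
/- Let C be the ellipse x² + 4y² = 4 in ℝ². For b ∈ (0,1/3), let P_b = (−2√(1−b²), −b) and for y ∈ (0,1) let Q_y = (2√(1−y²), y), and define g_b(y) = |P_b Q_y|². Then there is a unique m_b ∈ (0,1) with g_b strictly increasing on (0, m_b] and strictly decreasing on [m_b, 1); moreover m_b < b/3, the map b ↦ m_b is continuous and strictly increasing on (0,1/3), and Q_{m_b} is the unique farthest point on C from P_b. -/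
open Set

noncomputable def Bf (x : ℝ) : ℝ := x * (7 + 9 * x ^ 2) / (1 + 15 * x ^ 2)

lemma denom_pos (x : ℝ) : (0:ℝ) < 1 + 15 * x ^ 2 := by positivity

lemma Bf_cont : Continuous Bf := by
  apply Continuous.div (by continuity) (by continuity) (fun x => (denom_pos x).ne')

lemma Bf_hasDeriv (x : ℝ) :
    HasDerivAt Bf ((7 - 78*x^2 + 135*x^4)/(1+15*x^2)^2) x := by
  have h1 : HasDerivAt (fun x : ℝ => x * (7 + 9*x^2)) (7 + 27*x^2) x := by
    have := (hasDerivAt_id x).mul (((hasDerivAt_pow 2 x).const_mul 9).const_add 7)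
    refine this.congr_deriv ?_
    simp [id]; ring
  have h2 : HasDerivAt (fun x : ℝ => 1 + 15*x^2) (30*x) x := by
    have := ((hasDerivAt_pow 2 x).const_mul 15).const_add 1
    refine this.congr_deriv ?_
    push_cast
    ring
  have := h1.div h2 (denom_pos x).ne'
  have heq : Bf = fun x : ℝ => (x * (7 + 9*x^2)) / (1 + 15*x^2) := rfl
  rw [heq]
  refine this.congr_deriv ?_
  field_simp
  ring

lemma Bf_mono : StrictMonoOn Bf (Icc 0 (1/3)) := by
  apply strictMonoOn_of_deriv_pos (convex_Icc _ _) Bf_cont.continuousOn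
  intro x hx
  rw [interior_Icc] at hx
  rw [(Bf_hasDeriv x).deriv]
  have h1 : 0 < 1 - 9*x^2 := by nlinarith [hx.1, hx.2]
  have h2 : 0 < 7 - 15*x^2 := by nlinarith [hx.1, hx.2]
  have h3 : (0:ℝ) < 7 - 78*x^2 + 135*x^4 := by nlinarith [mul_pos h1 h2]
  exact div_pos h3 (by positivity)

lemma Bf_zero : Bf 0 = 0 := by norm_num [Bf]

lemma Bf_third : Bf (1/3) = 1 := by norm_num [Bf]

lemma Bf_surj {b : ℝ} (hb : b ∈ Icc (0:ℝ) 1) : ∃ x ∈ Icc (0:ℝ) (1/3), Bf x = b := by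
  have h := intermediate_value_Icc (by norm_num : (0:ℝ) ≤ 1/3) Bf_cont.continuousOn
  have hb' : b ∈ Icc (Bf 0) (Bf (1/3)) := by rw [Bf_zero, Bf_third]; exact hb
  obtain ⟨x, hx, hxb⟩ := h hb'
  exact ⟨x, hx, hxb⟩

noncomputable def mfun (b : ℝ) : ℝ := Function.invFunOn Bf (Icc 0 (1/3)) b

lemma mfun_spec {b : ℝ} (hb : b ∈ Icc (0:ℝ) 1) :
    mfun b ∈ Icc (0:ℝ) (1/3) ∧ Bf (mfun b) = b :=
  ⟨Function.invFunOn_mem (Bf_surj hb), Function.invFunOn_eq (Bf_surj hb)⟩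

lemma mfun_mem {b : ℝ} (hb : b ∈ Ioo (0:ℝ) (1/3)) : mfun b ∈ Ioo (0:ℝ) (1/3) := by
  have hb' : b ∈ Icc (0:ℝ) 1 := ⟨hb.1.le, by linarith [hb.2]⟩
  obtain ⟨hmem, hBM⟩ := mfun_spec hb'
  constructor
  · rcases hmem.1.lt_or_eq with h | h
    · exact h
    · exfalso; rw [← h, Bf_zero] at hBM; exact absurd hBM.symm hb.1.ne'
  · rcases hmem.2.lt_or_eq with h | h
    · exact h
    · exfalso; rw [h, Bf_third] at hBM; linarith [hb.2]

lemma mfun_strictMono : StrictMonoOn mfun (Ioo 0 (1/3)) := by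
  intro b1 h1 b2 h2 hlt
  obtain ⟨s1, e1⟩ := mfun_spec (⟨h1.1.le, by linarith [h1.2]⟩ : b1 ∈ Icc (0:ℝ) 1)
  obtain ⟨s2, e2⟩ := mfun_spec (⟨h2.1.le, by linarith [h2.2]⟩ : b2 ∈ Icc (0:ℝ) 1)
  exact (Bf_mono.lt_iff_lt s1 s2).mp (by rw [e1, e2]; exact hlt)

lemma mfun_cont : ContinuousOn mfun (Ioo 0 (1/3)) := by
  intro b0 hb0
  apply ContinuousAt.continuousWithinAt
  obtain ⟨hcmem, hBc⟩ := mfun_spec (by norm_num : (1/3:ℝ) ∈ Icc (0:ℝ) 1)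
  obtain ⟨hMmem, hBM⟩ := mfun_spec (⟨hb0.1.le, by linarith [hb0.2]⟩ : b0 ∈ Icc (0:ℝ) 1)
  have hMc : mfun b0 < mfun (1/3) :=
    (Bf_mono.lt_iff_lt hMmem hcmem).mp (by rw [hBM, hBc]; exact hb0.2)
  have hM0 : 0 < mfun b0 := (mfun_mem hb0).1
  apply StrictMonoOn.continuousAt_of_image_mem_nhds mfun_strictMono (isOpen_Ioo.mem_nhds hb0)
  apply Filter.mem_of_superset
    (isOpen_Ioo.mem_nhds (⟨hM0, hMc⟩ : mfun b0 ∈ Ioo 0 (mfun (1/3))))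
  intro x hx
  have hxIcc : x ∈ Icc (0:ℝ) (1/3) := ⟨hx.1.le, le_trans hx.2.le hcmem.2⟩
  have hBx1 : Bf x ∈ Ioo (0:ℝ) (1/3) := by
    constructor
    · rw [← Bf_zero]
      exact Bf_mono (⟨le_refl 0, by norm_num⟩ : (0:ℝ) ∈ Icc (0:ℝ) (1/3)) hxIcc hx.1
    · rw [← hBc]
      exact Bf_mono hxIcc hcmem hx.2
  refine ⟨Bf x, hBx1, ?_⟩
  obtain ⟨hm2, hB2⟩ := mfun_spec (⟨hBx1.1.le, by linarith [hBx1.2]⟩ : Bf x ∈ Icc (0:ℝ) 1)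
  exact Bf_mono.injOn hm2 hxIcc hB2

lemma sqrt_id {x : ℝ} (hx0 : 0 ≤ x) (hx : x ≤ 1/3) :
    Real.sqrt (1 - (Bf x)^2) = (1 - 9*x^2) * Real.sqrt (1 - x^2) / (1 + 15*x^2) := by
  have hx2 : x^2 ≤ 1/9 := by nlinarith
  have hs : Real.sqrt (1 - x^2) ^ 2 = 1 - x^2 := Real.sq_sqrt (by nlinarith)
  have h9 : (0:ℝ) ≤ 1 - 9*x^2 := by nlinarith
  have heq : 1 - (Bf x)^2 = ((1 - 9*x^2) * Real.sqrt (1 - x^2) / (1 + 15*x^2))^2 := by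
    rw [div_pow, mul_pow, hs]
    unfold Bf
    rw [div_pow]
    field_simp
    ring
  rw [heq, Real.sqrt_sq (by positivity)]

lemma t_strictMono : StrictMonoOn (fun y : ℝ => y / Real.sqrt (1 - y^2)) (Ioo (-1:ℝ) 1) := by
  apply strictMonoOn_of_deriv_pos (convex_Ioo _ _)
  · intro y hy
    apply ContinuousAt.continuousWithinAt
    apply ContinuousAt.div continuousAt_id
      (Real.continuous_sqrt.continuousAt.comp (by fun_prop))
    exact (Real.sqrt_pos.mpr (show (0:ℝ) < 1 - y^2 by nlinarith [hy.1, hy.2])).ne'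
  · intro y hy
    rw [interior_Ioo] at hy
    have hu : 0 < 1 - y^2 := by nlinarith [hy.1, hy.2]
    have hsu : 0 < Real.sqrt (1 - y^2) := Real.sqrt_pos.mpr hu
    have h1 : HasDerivAt (fun y : ℝ => 1 - y^2) (-(2*y)) y := by
      simpa using (hasDerivAt_pow 2 y).const_sub 1
    have h2 : HasDerivAt (fun y : ℝ => Real.sqrt (1 - y^2)) (-y / Real.sqrt (1 - y^2)) y := by
      have := (Real.hasDerivAt_sqrt hu.ne').comp y h1
      refine this.congr_deriv ?_
      field_simp
    have h3 := (hasDerivAt_id' y).div h2 hsu.ne'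
    rw [show (fun y : ℝ => y / Real.sqrt (1 - y^2)) = (fun x : ℝ => x) / (fun y : ℝ => Real.sqrt (1 - y^2)) from rfl, h3.deriv]
    apply div_pos
    · have h4 : 1 * Real.sqrt (1-y^2) - y * (-y / Real.sqrt (1-y^2))
          = Real.sqrt (1-y^2) + y^2 / Real.sqrt (1-y^2) := by ring
      rw [h4]
      positivity
    · positivity

lemma g_hasDeriv (b : ℝ) {y : ℝ} (hy : y ∈ Ioo (-1:ℝ) 1) :
    HasDerivAt (fun y => (2*Real.sqrt (1-b^2) + 2*Real.sqrt (1-y^2))^2 + (b+y)^2)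
      (2*b - 6*y - 8*Real.sqrt (1-b^2)*y/Real.sqrt (1-y^2)) y := by
  have hu : 0 < 1 - y^2 := by nlinarith [hy.1, hy.2]
  have hsu : 0 < Real.sqrt (1 - y^2) := Real.sqrt_pos.mpr hu
  have h1 : HasDerivAt (fun y : ℝ => 1 - y^2) (-(2*y)) y := by
    simpa using (hasDerivAt_pow 2 y).const_sub 1
  have h2 : HasDerivAt (fun y : ℝ => Real.sqrt (1 - y^2)) (-y / Real.sqrt (1 - y^2)) y := by
    have := (Real.hasDerivAt_sqrt hu.ne').comp y h1
    refine this.congr_deriv ?_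
    field_simp
  have h3 : HasDerivAt (fun y : ℝ => 2*Real.sqrt (1-b^2) + 2*Real.sqrt (1-y^2))
      (2 * (-y/Real.sqrt (1-y^2))) y := (h2.const_mul 2).const_add (2*Real.sqrt (1-b^2))
  have h4 := h3.pow 2
  have h5 : HasDerivAt (fun y : ℝ => (b + y)^2) (2*(b+y)) y := by
    have := ((hasDerivAt_id y).const_add b).pow 2
    exact this.congr_deriv (by simp)
  have h6 := h4.add h5
  refine h6.congr_deriv ?_
  field_simp
  ring

set_option maxHeartbeats 1000000 in
/-- On the ellipse `x² + 4y² = 4`, with `P b = (−2√(1−b²), −b)` and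
`Q y = (2√(1−y²), y)`, and `g_b y = |P b − Q y|²`: for every `b ∈ (0, 1/3)` there is a
unique `m_b ∈ (0,1)` such that `g_b` is strictly increasing on `(0, m_b]` and strictly
decreasing on `[m_b, 1)`; moreover `m_b < b/3`, the map `b ↦ m_b` is continuous and
strictly increasing on `(0, 1/3)`, and `Q (m_b)` is the unique farthest point of the
ellipse from `P b`. -/
theorem stmt16
    (C : Set (ℝ × ℝ)) (hC : C = {p : ℝ × ℝ | p.1 ^ 2 + 4 * p.2 ^ 2 = 4})
    (P Q : ℝ → ℝ × ℝ)
    (hP : ∀ b, P b = (-2 * Real.sqrt (1 - b ^ 2), -b))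
    (hQ : ∀ y, Q y = (2 * Real.sqrt (1 - y ^ 2), y))
    (gb : ℝ → ℝ → ℝ)
    (hgb : ∀ b y, gb b y = ((P b).1 - (Q y).1) ^ 2 + ((P b).2 - (Q y).2) ^ 2) :
    ∃ m : ℝ → ℝ,
      StrictMonoOn m (Ioo 0 (1 / 3)) ∧
      ContinuousOn m (Ioo 0 (1 / 3)) ∧
      ∀ b ∈ Ioo (0 : ℝ) (1 / 3),
        m b ∈ Ioo (0 : ℝ) 1 ∧
        m b < b / 3 ∧
        StrictMonoOn (gb b) (Ioc 0 (m b)) ∧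
        StrictAntiOn (gb b) (Ico (m b) 1) ∧
        (∀ m' ∈ Ioo (0 : ℝ) 1,
          StrictMonoOn (gb b) (Ioc 0 m') → StrictAntiOn (gb b) (Ico m' 1) →
          m' = m b) ∧
        (∀ E ∈ C, E ≠ Q (m b) →
          (E.1 - (P b).1) ^ 2 + (E.2 - (P b).2) ^ 2 < gb b (m b)) := by
  refine ⟨mfun, mfun_strictMono, mfun_cont, ?_⟩
  intro b hb
  have hb1 : 0 < b := hb.1
  have hb2 : b < 1/3 := hb.2
  obtain ⟨hMIcc, hBM⟩ := mfun_spec (⟨hb1.le, by linarith⟩ : b ∈ Icc (0:ℝ) 1)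
  have hM : mfun b ∈ Ioo (0:ℝ) (1/3) := mfun_mem hb
  set M := mfun b with hMdef
  have hM0 : 0 < M := hM.1
  have hM3 : M < 1/3 := hM.2
  have hM1 : M < 1 := by linarith
  have hspos : 0 < Real.sqrt (1 - b^2) := Real.sqrt_pos.mpr (by nlinarith)
  have huM : 0 < 1 - M^2 := by nlinarith
  have hsuM : 0 < Real.sqrt (1 - M^2) := Real.sqrt_pos.mpr huM
  have hs_eq : Real.sqrt (1 - b^2) = (1 - 9*M^2) * Real.sqrt (1 - M^2) / (1 + 15*M^2) := by
    rw [← hBM]; exact sqrt_id hMIcc.1 hMIcc.2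
  have hpsi : 2*b = 6*M + 8*Real.sqrt (1 - b^2)*(M/Real.sqrt (1 - M^2)) := by
    rw [hs_eq, ← hBM]
    unfold Bf
    field_simp
    ring
  have hb3M : 3*M < b := by
    rw [← hBM]
    unfold Bf
    rw [lt_div_iff₀ (denom_pos M)]
    nlinarith [mul_pos hM0 (show (0:ℝ) < 1 - 9*M^2 by nlinarith)]
  have hgb2 : gb b = fun y => (2*Real.sqrt (1-b^2) + 2*Real.sqrt (1-y^2))^2 + (b+y)^2 := by
    funext y
    rw [hgb, hP, hQ]
    ring
  have hcont : Continuous (gb b) := by rw [hgb2]; fun_prop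
  have hderiv : ∀ y ∈ Ioo (-1:ℝ) 1,
      deriv (gb b) y = 2*b - 6*y - 8*Real.sqrt (1-b^2)*(y/Real.sqrt (1-y^2)) := by
    intro y hy
    rw [hgb2, (g_hasDeriv b hy).deriv]
    ring
  have hpos : ∀ y ∈ Ioo (-1:ℝ) M, 0 < deriv (gb b) y := by
    intro y hy
    have hy1 : y ∈ Ioo (-1:ℝ) 1 := ⟨hy.1, hy.2.trans hM1⟩
    rw [hderiv y hy1]
    have huy : 0 < 1 - y^2 := by nlinarith [hy1.1, hy1.2]
    have hsuy : 0 < Real.sqrt (1 - y^2) := Real.sqrt_pos.mpr huy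
    rcases le_or_gt y 0 with h0 | h0
    · have h8 : 8*Real.sqrt (1-b^2)*(y/Real.sqrt (1-y^2)) ≤ 0 := by
        apply mul_nonpos_of_nonneg_of_nonpos (by positivity)
        exact div_nonpos_of_nonpos_of_nonneg h0 hsuy.le
      nlinarith
    · have ht := t_strictMono (show y ∈ Ioo (-1:ℝ) 1 from hy1)
        (show M ∈ Ioo (-1:ℝ) 1 from ⟨by linarith, hM1⟩) hy.2
      have h8 : 8*Real.sqrt (1-b^2)*(y/Real.sqrt (1-y^2))
          < 8*Real.sqrt (1-b^2)*(M/Real.sqrt (1-M^2)) :=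
        mul_lt_mul_of_pos_left ht (by positivity)
      have h6 : 6*y < 6*M := by linarith [hy.2]
      linarith [hpsi]
  have hneg : ∀ y ∈ Ioo M 1, deriv (gb b) y < 0 := by
    intro y hy
    have hy1 : y ∈ Ioo (-1:ℝ) 1 := ⟨by linarith [hy.1], hy.2⟩
    rw [hderiv y hy1]
    have ht := t_strictMono (show M ∈ Ioo (-1:ℝ) 1 from ⟨by linarith, hM1⟩)
      (show y ∈ Ioo (-1:ℝ) 1 from hy1) hy.1
    have h8 : 8*Real.sqrt (1-b^2)*(M/Real.sqrt (1-M^2))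
        < 8*Real.sqrt (1-b^2)*(y/Real.sqrt (1-y^2)) :=
      mul_lt_mul_of_pos_left ht (by positivity)
    have h6 : 6*M < 6*y := by linarith [hy.1]
    linarith [hpsi]
  have hmonoIcc : StrictMonoOn (gb b) (Icc (-1) M) := by
    apply strictMonoOn_of_deriv_pos (convex_Icc _ _) hcont.continuousOn
    intro y hy
    rw [interior_Icc] at hy
    exact hpos y hy
  have hantiIcc : StrictAntiOn (gb b) (Icc M 1) := by
    apply strictAntiOn_of_deriv_neg (convex_Icc _ _) hcont.continuousOn
    intro y hy
    rw [interior_Icc] at hy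
    exact hneg y hy
  have hmono : StrictMonoOn (gb b) (Ioc 0 M) :=
    hmonoIcc.mono (fun x hx => ⟨by linarith [hx.1], hx.2⟩)
  have hanti : StrictAntiOn (gb b) (Ico M 1) :=
    hantiIcc.mono (fun x hx => ⟨hx.1, hx.2.le⟩)
  refine ⟨⟨hM0, hM1⟩, by linarith, hmono, hanti, ?_, ?_⟩
  · intro m' hm' hmono' hanti'
    by_contra hne
    rcases lt_or_gt_of_ne hne with hlt | hgt
    · have h1 : gb b m' < gb b M := hmono ⟨hm'.1, hlt.le⟩ ⟨hM0, le_refl M⟩ hlt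
      have h2 : gb b M < gb b m' := hanti' ⟨le_refl m', hm'.2⟩ ⟨hlt.le, hM1⟩ hlt
      linarith
    · have h1 : gb b M < gb b m' := hmono' ⟨hM0, hgt.le⟩ ⟨hm'.1, le_refl m'⟩ hgt
      have h2 : gb b m' < gb b M := hanti ⟨le_refl M, hM1⟩ ⟨hgt.le, hm'.2⟩ hgt
      linarith
  · intro E hE hne
    rw [hC] at hE
    have hE' : E.1^2 + 4*E.2^2 = 4 := hE
    have hy2 : E.2^2 ≤ 1 := by nlinarith [sq_nonneg E.1]
    have hyIcc : E.2 ∈ Icc (-1:ℝ) 1 := ⟨by nlinarith, by nlinarith⟩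
    have hx2 : E.1^2 = 4*(1 - E.2^2) := by linarith
    have hsq : Real.sqrt (1 - E.2^2)^2 = 1 - E.2^2 := Real.sq_sqrt (by linarith)
    have hxle : E.1 ≤ 2*Real.sqrt (1 - E.2^2) := by
      have h1 : E.1 ≤ |E.1| := le_abs_self _
      have h2 : |E.1| = Real.sqrt (E.1^2) := (Real.sqrt_sq_eq_abs E.1).symm
      have h3 : Real.sqrt (E.1^2) = 2*Real.sqrt (1 - E.2^2) := by
        rw [hx2, show (4:ℝ)*(1-E.2^2) = (2*Real.sqrt (1-E.2^2))^2 by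
          rw [mul_pow, hsq]; ring]
        exact Real.sqrt_sq (by positivity)
      rw [h3] at h2
      linarith
    have hstrict : ∀ y' ∈ Icc (-1:ℝ) 1, y' ≠ M → gb b y' < gb b M := by
      intro y' hy' hne'
      rcases lt_or_gt_of_ne hne' with h | h
      · exact hmonoIcc ⟨hy'.1, h.le⟩ ⟨by linarith, le_refl M⟩ h
      · exact hantiIcc ⟨le_refl M, by linarith⟩ ⟨h.le, hy'.2⟩ h
    have hglem : gb b E.2 ≤ gb b M := by
      rcases eq_or_ne E.2 M with h | h
      · rw [h]
      · exact (hstrict E.2 hyIcc h).le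
    rcases hxle.lt_or_eq with hxlt | hxeq
    · have h1 : (E.1 - (P b).1)^2 + (E.2 - (P b).2)^2 < gb b E.2 := by
        rw [hgb2, hP]
        dsimp only
        nlinarith [mul_pos hspos (sub_pos.mpr hxlt), hsq, hx2]
      linarith
    · have hEQ : E = Q E.2 := by
        rw [hQ]
        exact Prod.ext hxeq rfl
      have hyne : E.2 ≠ M := fun h => hne (by rw [hEQ, h])
      have h1 : (E.1 - (P b).1)^2 + (E.2 - (P b).2)^2 = gb b E.2 := by
        rw [hgb b E.2, hQ]
        dsimp only
        rw [← hxeq]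
        ring
      rw [h1]
      exact hstrict E.2 hyIcc hyne
end

section
/- For every positive integer k ≥ 2 there exists a constant B_k ≥ 1 (one may take B_k = A_{k-1}/A_{k-1,α} with α = arccos(2/3)/2) such that: if P, X_1, …, X_n ∈ ℝ^k satisfy |PX_i| > 6 for all i and |PX_i| < |X_iX_j| + 1 for all distinct i,j, then n ≤ B_k. In particular, for all distinct i,j, the angle ∠X_iPX_j satisfies cos(∠X_iPX_j) < 2/3. -/
open EuclideanGeometry

/-- For every `k ≥ 2` there is `B_k ≥ 1` such that: if `P, X₁, …, X_n ∈ ℝ^k` satisfy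
`|PXᵢ| > 6` for all `i` and `|PXᵢ| < |XᵢXⱼ| + 1` for all `i ≠ j`, then `n ≤ B_k`, and
moreover all angles `∠ Xᵢ P Xⱼ` (for `i ≠ j`) satisfy `cos (∠ Xᵢ P Xⱼ) < 2/3`. -/
theorem stmt19 (k : ℕ) (hk : 2 ≤ k) :
    ∃ B : ℝ, 1 ≤ B ∧
      ∀ (n : ℕ) (P : EuclideanSpace ℝ (Fin k)) (X : Fin n → EuclideanSpace ℝ (Fin k)),
        (∀ i, 6 < dist P (X i)) →
        (∀ i j : Fin n, i ≠ j → dist P (X i) < dist (X i) (X j) + 1) →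
        (n : ℝ) ≤ B ∧
        ∀ i j : Fin n, i ≠ j → Real.cos (∠ (X i) P (X j)) < 2 / 3 := by
  obtain ⟨t, htf, hts⟩ :=
    Metric.totallyBounded_iff.mp
      (isCompact_sphere (0 : EuclideanSpace ℝ (Fin k)) 1).totallyBounded (1/3) (by norm_num)
  refine ⟨max 1 htf.toFinset.card, le_max_left _ _, ?_⟩
  intro n P X h6 hd
  have hcos : ∀ i j : Fin n, i ≠ j → Real.cos (∠ (X i) P (X j)) < 2 / 3 := by
    intro i j hij
    have hc := EuclideanGeometry.law_cos (X i) P (X j)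
    have ha : (6:ℝ) < dist (X i) P := by rw [dist_comm]; exact h6 i
    have hb : (6:ℝ) < dist (X j) P := by rw [dist_comm]; exact h6 j
    have h1 : dist (X i) P < dist (X i) (X j) + 1 := by
      rw [dist_comm]; exact hd i j hij
    have h2 : dist (X j) P < dist (X i) (X j) + 1 := by
      rw [dist_comm (X j) P, dist_comm (X i) (X j)]; exact hd j i hij.symm
    set a := dist (X i) P with hadef
    set b := dist (X j) P with hbdef
    set c := dist (X i) (X j) with hcdef
    have hc0 : 0 ≤ c := dist_nonneg
    have hab : 0 < 2 * a * b := by positivity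
    have hcoseq : Real.cos (∠ (X i) P (X j)) = (a * a + b * b - c * c) / (2 * a * b) := by
      field_simp
      linarith [hc]
    rw [hcoseq, div_lt_iff₀ hab]
    rcases le_total a b with h | h
    · have hcb : (b-1)*(b-1) < c*c :=
        mul_self_lt_mul_self (by linarith) (by linarith)
      nlinarith [mul_nonneg (by linarith : (0:ℝ) ≤ a) (by linarith : (0:ℝ) ≤ b - a),
        mul_pos (by linarith : (0:ℝ) < a - 6) (by linarith : (0:ℝ) < b)]
    · have hcb : (a-1)*(a-1) < c*c :=
        mul_self_lt_mul_self (by linarith) (by linarith)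
      nlinarith [mul_nonneg (by linarith : (0:ℝ) ≤ b) (by linarith : (0:ℝ) ≤ a - b),
        mul_pos (by linarith : (0:ℝ) < b - 6) (by linarith : (0:ℝ) < a)]
  refine ⟨?_, hcos⟩
  set u : Fin n → EuclideanSpace ℝ (Fin k) := fun i => ‖X i - P‖⁻¹ • (X i - P) with hu
  have hnorm : ∀ i, 0 < ‖X i - P‖ := by
    intro i
    have := h6 i
    rw [dist_eq_norm, ← norm_neg] at this
    simp only [neg_sub] at this
    linarith
  have hu1 : ∀ i, ‖u i‖ = 1 := by
    intro i
    rw [hu]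
    simp only [norm_smul, norm_inv, norm_norm]
    exact inv_mul_cancel₀ (hnorm i).ne'
  have hinner : ∀ i j, (inner ℝ (u i) (u j) : ℝ) = Real.cos (∠ (X i) P (X j)) := by
    intro i j
    have : ∠ (X i) P (X j) = InnerProductGeometry.angle (X i - P) (X j - P) := by
      rw [EuclideanGeometry.angle]
      norm_num [vsub_eq_sub]
    rw [this, InnerProductGeometry.cos_angle, hu]
    simp only [real_inner_smul_left, real_inner_smul_right]
    field_simp
  have hsep : ∀ i j : Fin n, i ≠ j → 2/3 < dist (u i) (u j) := by
    intro i j hij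
    have hsq : ‖u i - u j‖ ^ 2 = 2 - 2 * (inner ℝ (u i) (u j) : ℝ) := by
      rw [norm_sub_sq_real, hu1, hu1]; ring
    have hcij := hcos i j hij
    rw [hinner i j] at hsq
    have hdn : dist (u i) (u j) = ‖u i - u j‖ := dist_eq_norm _ _
    rw [hdn]
    nlinarith [norm_nonneg (u i - u j)]
  have hchoice : ∀ i, ∃ y ∈ t, u i ∈ Metric.ball y (1/3) := by
    intro i
    have : u i ∈ Metric.sphere (0 : EuclideanSpace ℝ (Fin k)) 1 := by
      simp [hu1 i]
    have := hts this
    simpa using this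
  choose f hf hf2 using hchoice
  have hcard : n ≤ htf.toFinset.card := by
    have := Finset.card_le_card_of_injOn (s := (Finset.univ : Finset (Fin n))) f
      (fun i _ => htf.mem_toFinset.mpr (hf i))
      (by
        intro i _ j _ hfij
        by_contra hij
        have hA : dist (u i) (f j) < 1/3 := by
          rw [← hfij]; simpa [Metric.mem_ball] using hf2 i
        have hB : dist (f j) (u j) < 1/3 := by
          rw [dist_comm]; simpa [Metric.mem_ball] using hf2 j
        have hT := dist_triangle (u i) (f j) (u j)
        linarith [hsep i j hij])
    simpa using this
  calc (n : ℝ) ≤ (htf.toFinset.card : ℝ) := by exact_mod_cast hcard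
    _ ≤ max 1 (htf.toFinset.card : ℝ) := le_max_right _ _
end
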